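/- arXiv:2411.00228 — 2 statements merged into one kernel-verified Lean document; each statement's English description precedes it below -/
import Mathlib

section
/- For any two natural numbers m and n, the localizations C[x,x^{-1}] ⊗_{C[x]} g(m) and C[x,x^{-1}] ⊗_{C[x]} g(n) are isomorphic as Lie algebras over the Laurent polynomial ring C[x,x^{-1}]; explicitly, the C[x,x^{-1}]-linear map sending 1⊗H_m ↦ 1⊗H_n, 1⊗X_m ↦ 1⊗X_n, 1⊗Y_m ↦ x^{m-n}⊗Y_n is a Lie algebra isomorphism. -/
open LaurentPolynomial

/-- The bracket of the localization `ℂ[x,x⁻¹] ⊗_{ℂ[x]} g(n)`, a free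
`ℂ[x,x⁻¹]`-module with basis `H = e 0`, `X = e 1`, `Y = e 2` and
`[H,X] = 2X`, `[H,Y] = -2Y`, `[X,Y] = x^n • H`. -/
noncomputable def brL (n : ℕ) (a b : Fin 3 → LaurentPolynomial ℂ) :
    Fin 3 → LaurentPolynomial ℂ :=
  ![T (n : ℤ) * (a 1 * b 2 - a 2 * b 1),
    2 * (a 0 * b 1 - a 1 * b 0),
    (-2) * (a 0 * b 2 - a 2 * b 0)]

/-- For any `m n : ℕ`, the `ℂ[x,x⁻¹]`-linear map sending
`1⊗H_m ↦ 1⊗H_n`, `1⊗X_m ↦ 1⊗X_n`, `1⊗Y_m ↦ x^{m-n}⊗Y_n` is an isomorphism of Lie algebras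
over `ℂ[x,x⁻¹]` from the localization of `g(m)` to the localization of `g(n)`. -/
theorem localizations_isomorphic (m n : ℕ)
    (f : (Fin 3 → LaurentPolynomial ℂ) →ₗ[LaurentPolynomial ℂ]
        (Fin 3 → LaurentPolynomial ℂ))
    (hf : ∀ a, f a = ![a 0, a 1, T ((m : ℤ) - (n : ℤ)) * a 2]) :
    Function.Bijective f ∧ ∀ a b, f (brL m a b) = brL n (f a) (f b) := by

  have hT : ∀ (k : ℤ) (c : LaurentPolynomial ℂ), T k * (T (-k) * c) = c := by
    intro k c
    rw [← mul_assoc, ← T_add, add_neg_cancel, T_zero, one_mul]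
  constructor
  · constructor
    · intro a b hab
      have h := congrFun (hf a ▸ hf b ▸ hab)
      funext i
      fin_cases i
      · simpa using h 0
      · simpa using h 1
      · have h2 := h 2
        simp only [Matrix.cons_val_two, Matrix.tail_cons, Matrix.head_cons] at h2
        exact mul_left_cancel₀ (((isUnit_T _).ne_zero)) h2
    · intro b
      refine ⟨![b 0, b 1, T (-(((m:ℤ) - n))) * b 2], ?_⟩
      rw [hf]
      funext i
      fin_cases i <;> simp [hT]
  · intro a b
    have hTT : (T ((m:ℤ) - n) * T (n:ℤ) : LaurentPolynomial ℂ) = T (m:ℤ) := by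
      calc T ((m:ℤ) - n) * T (n:ℤ) = T (((m:ℤ) - n) + n) := (T_add _ _).symm
        _ = T (m:ℤ) := by norm_num
    rw [hf, hf, hf]
    funext i
    fin_cases i
    · simp [brL]
      rw [← hTT]; ring
    · simp [brL]
    · simp [brL]
      ring
end

section
/- In the localized Lie algebra C[x,x^{-1}] ⊗_{C[x]} g(m), any C[x,x^{-1}]-Lie algebra morphism ψ to C[x,x^{-1}] ⊗_{C[x]} g(n) sending 1⊗H_m to f_H·(1⊗H_n), 1⊗X_m to f_X·(1⊗X_n), and 1⊗Y_m to f_Y·(1⊗Y_n) with f_H, f_X, f_Y ∈ C[x,x^{-1}], is either zero or satisfies f_H = 1 and f_X·f_Y = x^{m-n}; in the nonzero case there exist c ∈ C^× and k ∈ Z with f_X = c·x^k and f_Y = c^{-1}·x^{m-n-k}. -/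
open LaurentPolynomial

noncomputable def HvL : Fin 3 → LaurentPolynomial ℂ := ![1, 0, 0]
noncomputable def XvL : Fin 3 → LaurentPolynomial ℂ := ![0, 1, 0]
noncomputable def YvL : Fin 3 → LaurentPolynomial ℂ := ![0, 0, 1]

lemma laurent_unit_form (f g : LaurentPolynomial ℂ) (s : ℤ) (h : f * g = T s) :
    ∃ c : ℂ, c ≠ 0 ∧ ∃ k : ℤ, f = C c * T k := by
  obtain ⟨a, p, hp⟩ := f.exists_T_pow
  obtain ⟨b, q, hq⟩ := g.exists_T_pow
  set e : ℤ := s + a + b with he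
  have key : Polynomial.toLaurent (p * q * Polynomial.X ^ (-e).toNat) =
      Polynomial.toLaurent (Polynomial.X ^ e.toNat : Polynomial ℂ) := by
    rw [map_mul, map_mul, hp, hq, Polynomial.toLaurent_X_pow, Polynomial.toLaurent_X_pow]
    have h2 : f * T (a:ℤ) * (g * T (b:ℤ)) * T ((-e).toNat : ℤ) =
        f * g * (T (a:ℤ) * T (b:ℤ) * T ((-e).toNat : ℤ)) := by ring
    rw [h2, h]
    simp only [← T_add]
    congr 1
    omega
  have hpq : p * q * Polynomial.X ^ (-e).toNat = Polynomial.X ^ e.toNat :=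
    Polynomial.toLaurent_injective key
  have hdvd : p ∣ (Polynomial.X : Polynomial ℂ) ^ e.toNat :=
    ⟨q * Polynomial.X ^ (-e).toNat, by rw [← hpq]; ring⟩
  obtain ⟨i, _, u, hu⟩ := (dvd_prime_pow Polynomial.prime_X _).mp hdvd
  obtain ⟨c, hc, hcu⟩ := Polynomial.isUnit_iff.mp u.isUnit
  rw [← hcu] at hu
  have hcc : c ≠ 0 := hc.ne_zero
  have hpform : p = Polynomial.C c⁻¹ * Polynomial.X ^ i := by
    calc p = p * Polynomial.C c * Polynomial.C c⁻¹ := by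
            rw [mul_assoc, ← Polynomial.C_mul, mul_inv_cancel₀ hcc, Polynomial.C_1, mul_one]
      _ = Polynomial.C c⁻¹ * Polynomial.X ^ i := by rw [hu]; ring
  have hfp : f = Polynomial.toLaurent p * T (-(a:ℤ)) := by
    rw [hp, mul_assoc, ← T_add]; simp
  have hf : f = C c⁻¹ * T ((i : ℤ) - a) := by
    rw [hfp, hpform, map_mul, Polynomial.toLaurent_C, Polynomial.toLaurent_X_pow, T_sub]
    ring
  exact ⟨c⁻¹, inv_ne_zero hcc, (i : ℤ) - a, hf⟩

/-- Any `ℂ[x,x⁻¹]`-Lie algebra morphism `ψ` between the localizations of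
`g(m)` and `g(n)` sending `1⊗H_m ↦ f_H·(1⊗H_n)`, `1⊗X_m ↦ f_X·(1⊗X_n)`,
`1⊗Y_m ↦ f_Y·(1⊗Y_n)` is either zero or satisfies `f_H = 1` and `f_X·f_Y = x^{m-n}`;
in the nonzero case there are `c ∈ ℂˣ` and `k ∈ ℤ` with `f_X = c·x^k` and
`f_Y = c⁻¹·x^{m-n-k}`. -/
theorem localized_morphism_form (m n : ℕ)
    (ψ : (Fin 3 → LaurentPolynomial ℂ) →ₗ[LaurentPolynomial ℂ]
        (Fin 3 → LaurentPolynomial ℂ))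
    (fH fX fY : LaurentPolynomial ℂ)
    (hH : ψ HvL = fH • HvL) (hX : ψ XvL = fX • XvL) (hY : ψ YvL = fY • YvL)
    (hbr : ∀ a b, ψ (brL m a b) = brL n (ψ a) (ψ b)) :
    ψ = 0 ∨
      (fH = 1 ∧ fX * fY = T ((m : ℤ) - (n : ℤ)) ∧
        ∃ c : ℂ, c ≠ 0 ∧ ∃ k : ℤ,
          fX = C c * T k ∧ fY = C c⁻¹ * T ((m : ℤ) - (n : ℤ) - k)) := by
  have two_ne : (2 : LaurentPolynomial ℂ) ≠ 0 := by
    have h2 : Polynomial.toLaurent (2 : Polynomial ℂ) = (2 : LaurentPolynomial ℂ) :=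
      map_ofNat _ 2
    rw [← h2, Ne, Polynomial.toLaurent_eq_zero]
    norm_num
  have bHX : brL m HvL XvL = (2 : LaurentPolynomial ℂ) • XvL := by
    funext i; fin_cases i <;> simp [brL, HvL, XvL]
  have bHY : brL m HvL YvL = (-2 : LaurentPolynomial ℂ) • YvL := by
    funext i; fin_cases i <;> simp [brL, HvL, YvL]
  have bXY : brL m XvL YvL = (T (m : ℤ) : LaurentPolynomial ℂ) • HvL := by
    funext i; fin_cases i <;> simp [brL, HvL, XvL, YvL]
  -- equation from [H, X]
  have EX : (2 : LaurentPolynomial ℂ) * fX = 2 * (fH * fX) := by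
    have h1 : ψ ((2 : LaurentPolynomial ℂ) • XvL) = brL n (fH • HvL) (fX • XvL) := by
      rw [← bHX, hbr, hH, hX]
    rw [map_smul, hX] at h1
    have h2 := congrFun h1 1
    simpa [brL, HvL, XvL, smul_eq_mul, mul_comm, mul_left_comm] using h2
  have EY : (-2 : LaurentPolynomial ℂ) * fY = -2 * (fH * fY) := by
    have h1 : ψ ((-2 : LaurentPolynomial ℂ) • YvL) = brL n (fH • HvL) (fY • YvL) := by
      rw [← bHY, hbr, hH, hY]
    rw [map_smul, hY] at h1
    have h2 := congrFun h1 2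
    simpa [brL, HvL, YvL, smul_eq_mul, mul_comm, mul_left_comm] using h2
  have EH : T (m : ℤ) * fH = T (n : ℤ) * (fX * fY) := by
    have h1 : ψ ((T (m : ℤ) : LaurentPolynomial ℂ) • HvL) = brL n (fX • XvL) (fY • YvL) := by
      rw [← bXY, hbr, hX, hY]
    rw [map_smul, hH] at h1
    have h2 := congrFun h1 0
    simpa [brL, HvL, XvL, YvL, smul_eq_mul, mul_comm, mul_left_comm] using h2
  have EX' : fX = fH * fX := mul_left_cancel₀ two_ne EX
  have EY' : fY = fH * fY := by
    have := mul_left_cancel₀ (neg_ne_zero.mpr two_ne) EY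
    simpa using this
  by_cases hfH : fH = 1
  · right
    subst hfH
    have hXY : fX * fY = T ((m : ℤ) - (n : ℤ)) := by
      have : T (-(n : ℤ)) * (T (n : ℤ) * (fX * fY)) = T (-(n : ℤ)) * T (m : ℤ) := by
        rw [← EH]; ring
    -- T(-n)*T n = 1
      rw [← mul_assoc, ← T_add, neg_add_cancel, T_zero, one_mul] at this
      rw [this, ← T_add]
      congr 1; ring
    obtain ⟨c, hc, k, hfX⟩ := laurent_unit_form fX fY _ hXY
    have hfX0 : fX ≠ 0 := by
      intro h0
      apply (isUnit_T (R := ℂ) ((m : ℤ) - (n : ℤ))).ne_zero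
      rw [← hXY, h0, zero_mul]
    refine ⟨rfl, hXY, c, hc, k, hfX, ?_⟩
    have hcand : fX * (C c⁻¹ * T ((m : ℤ) - (n : ℤ) - k)) = T ((m : ℤ) - (n : ℤ)) := by
      rw [hfX]
      have : C c * T k * (C c⁻¹ * T ((m : ℤ) - (n : ℤ) - k)) =
          (C c * C c⁻¹) * (T k * T ((m : ℤ) - (n : ℤ) - k)) := by ring
      rw [this, ← map_mul, mul_inv_cancel₀ hc, map_one, one_mul, ← T_add]
      congr 1; ring
    exact mul_left_cancel₀ hfX0 (hXY.trans hcand.symm)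
  · left
    have hfX0 : fX = 0 := by
      have : fX * (fH - 1) = 0 := by rw [mul_sub]; rw [mul_comm fX fH]; rw [← EX']; ring
      rcases mul_eq_zero.mp this with h | h
      · exact h
      · exact absurd (sub_eq_zero.mp h) hfH
    have hfY0 : fY = 0 := by
      have : fY * (fH - 1) = 0 := by rw [mul_sub]; rw [mul_comm fY fH]; rw [← EY']; ring
      rcases mul_eq_zero.mp this with h | h
      · exact h
      · exact absurd (sub_eq_zero.mp h) hfH
    have hfH0 : fH = 0 := by
      have h0 : T (m : ℤ) * fH = 0 := by rw [EH, hfX0, hfY0]; ring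
      rcases mul_eq_zero.mp h0 with h | h
      · exact absurd h (isUnit_T (R := ℂ) (m : ℤ)).ne_zero
      · exact h
    have hv : ∀ v : Fin 3 → LaurentPolynomial ℂ,
        v = v 0 • HvL + v 1 • XvL + v 2 • YvL := by
      intro v; funext i; fin_cases i <;> simp [HvL, XvL, YvL]
    apply LinearMap.ext; intro v
    conv_lhs => rw [hv v]
    simp [map_add, map_smul, hH, hX, hY, hfH0, hfX0, hfY0]
end
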